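/- arXiv:1908.11075 — 4 statements merged into one kernel-verified Lean document; each statement's English description precedes it below -/
import Mathlib

section
/- Let S be a finite nonempty type, let Q be an S×S real matrix, let μ : S → ℝ, let σ : S → ℝ with σ i > 0 for all i, and let λ > 0. For each i ∈ S set ω_i := sqrt(μ_i²/σ_i⁴ + λ/σ_i²) + μ_i/σ_i² and η_i := sqrt(μ_i²/σ_i⁴ + λ/σ_i²) − μ_i/σ_i², and let Δ_{r+} := diag(λ/ω_i), Δ_{r−} := diag(λ/η_i). Suppose Ψ is an S×S real matrix satisfying Δ_{r+}⁻¹·(−λ·I)·Ψ + Ψ·Δ_{r−}⁻¹·(−λ·I) + Ψ·Δ_{r−}⁻¹·(λ·I)·Ψ + Δ_{r+}⁻¹·(2·Q + λ·I) = 0. Then U := λ·Δ_{r−}⁻¹·(Ψ − I) satisfies (Δ_{r−}⁻¹ − Δ_{r+}⁻¹)·U + λ⁻¹·U² + 2·Δ_{r+}⁻¹·Δ_{r−}⁻¹·Q = 0. -/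
open Matrix Real

lemma riccati_aux {R : Type*} [Ring R] [Algebra ℝ R] (D P Ψ Q : R) (lam : ℝ)
    (hlam : lam ≠ 0)
    (hc : D * P = P * D)
    (hric : P * ((-lam) • 1) * Ψ + Ψ * D * ((-lam) • 1) + Ψ * D * (lam • 1) * Ψ
      + P * ((2:ℝ) • Q + lam • 1) = 0) :
    (D - P) * (lam • (D * (Ψ - 1))) + lam⁻¹ • (lam • (D * (Ψ - 1))) ^ 2
      + (2:ℝ) • (P * D * Q) = 0 := by
  have hc' : ∀ X : R, D * (P * X) = P * (D * X) := fun X => by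
    rw [← mul_assoc, hc, mul_assoc]
  have key : D * (P * ((-lam) • 1) * Ψ + Ψ * D * ((-lam) • 1) + Ψ * D * (lam • 1) * Ψ
      + P * ((2:ℝ) • Q + lam • 1)) = 0 := by rw [hric, mul_zero]
  have hl : lam⁻¹ * (lam * lam) = lam := by field_simp
  simp only [mul_add, add_mul, sub_mul, mul_sub, mul_one, mul_assoc,
    Algebra.mul_smul_comm, Algebra.smul_mul_assoc, smul_smul, hc', hc, hl,
    smul_sub, smul_add, pow_two, neg_smul, mul_neg] at key ⊢
  abel_nf at key ⊢
  simp only [mul_assoc, Algebra.mul_smul_comm, Algebra.smul_mul_assoc, hc', hc] at key ⊢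
  abel_nf at key ⊢
  exact key

/-- From the Riccati matrix equation satisfied by `Ψ`, the matrix
`U := λ • Δ_{r−}⁻¹ (Ψ − I)` satisfies the intermediate identity
`(Δ_{r−}⁻¹ − Δ_{r+}⁻¹) U + λ⁻¹ U² + 2 Δ_{r+}⁻¹ Δ_{r−}⁻¹ Q = 0`. -/
theorem riccati_implies_intermediate
    {S : Type*} [Fintype S] [DecidableEq S] [Nonempty S]
    (Q : Matrix S S ℝ) (μ σ : S → ℝ) (hσ : ∀ i, 0 < σ i)
    (lam : ℝ) (hlam : 0 < lam)
    (ω η : S → ℝ)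
    (hω : ∀ i, ω i = Real.sqrt (μ i ^ 2 / σ i ^ 4 + lam / σ i ^ 2) + μ i / σ i ^ 2)
    (hη : ∀ i, η i = Real.sqrt (μ i ^ 2 / σ i ^ 4 + lam / σ i ^ 2) - μ i / σ i ^ 2)
    (Δrp Δrm : Matrix S S ℝ)
    (hΔrp : Δrp = Matrix.diagonal fun i => lam / ω i)
    (hΔrm : Δrm = Matrix.diagonal fun i => lam / η i)
    (Ψ : Matrix S S ℝ)
    (hRic : Δrp⁻¹ * ((-lam) • (1 : Matrix S S ℝ)) * Ψ
        + Ψ * Δrm⁻¹ * ((-lam) • (1 : Matrix S S ℝ))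
        + Ψ * Δrm⁻¹ * (lam • (1 : Matrix S S ℝ)) * Ψ
        + Δrp⁻¹ * ((2 : ℝ) • Q + lam • (1 : Matrix S S ℝ)) = 0)
    (U : Matrix S S ℝ) (hU : U = lam • (Δrm⁻¹ * (Ψ - 1))) :
    (Δrm⁻¹ - Δrp⁻¹) * U + lam⁻¹ • U ^ 2 + (2 : ℝ) • (Δrp⁻¹ * Δrm⁻¹ * Q) = 0 := by
  have hc : Δrm⁻¹ * Δrp⁻¹ = Δrp⁻¹ * Δrm⁻¹ := by
    rw [hΔrp, hΔrm, Matrix.inv_diagonal, Matrix.inv_diagonal,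
      Matrix.diagonal_mul_diagonal, Matrix.diagonal_mul_diagonal]
    exact congrArg Matrix.diagonal (funext fun i => mul_comm _ _)
  subst hU
  exact riccati_aux Δrm⁻¹ Δrp⁻¹ Ψ Q lam hlam.ne' hc hRic
end

section
/- Let a be a natural number with a ≥ 2 and let b > 0. Let Y be a random variable with the Erlang (Gamma) distribution of shape a and rate b, so that Y has mean a/b. Then for every natural number k ≥ 1, the k-th central moment satisfies E[(Y − a/b)^k] ≤ (k!·sqrt(a)/b^k) · ((sqrt(a))^{k+1} − 1)/(sqrt(a) − 1). -/
/-!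
Stein's identity for the Gamma law, `E[Y p'(Y) + (a - b Y) p(Y)] = 0` for every polynomial `p`,
is integration by parts against the density: `y ↦ y · density(y)` has derivative
`(a - b y) · density(y)` and vanishes at `0` and at `∞`. Taking `p = (X - a/b)^(n+1)` gives the
recurrence `b m_{n+2} = (n+1) m_{n+1} + (n+1) (a/b) m_n` for the central moments, with
`m_0 = 1` and `m_1 = 0`. The bound `n! √a / b^n · ∑_{j ≤ n} √a^j` is a supersolution of this
recurrence, because `(n+1) S_{n+1} + a S_n ≤ (n+2) S_{n+2}` for the partial geometric sums
`S_n = ∑_{j ≤ n} √a^j`, so it dominates `m_n` by induction.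
-/

open MeasureTheory ProbabilityTheory Real Set Filter Topology Polynomial

namespace ProbabilityTheory

variable {a b : ℝ}

lemma gammaPDF_eq_coe_toNNReal : gammaPDF a b = fun x ↦ ((gammaPDFReal a b x).toNNReal : ENNReal) :=
  rfl

lemma integral_gammaMeasure_eq_integral_Ioi (ha : 0 < a) (hb : 0 < b) (f : ℝ → ℝ) :
    ∫ x, f x ∂gammaMeasure a b = ∫ x in Ioi 0, f x * gammaPDFReal a b x := by
  rw [gammaMeasure, gammaPDF_eq_coe_toNNReal,
    integral_withDensity_eq_integral_smul (measurable_gammaPDFReal a b).real_toNNReal,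
    ← integral_Ici_eq_integral_Ioi, setIntegral_eq_integral_of_forall_compl_eq_zero]
  · congr 1 with x
    rw [NNReal.smul_def, Real.coe_toNNReal _ (gammaPDFReal_nonneg ha hb x), smul_eq_mul, mul_comm]
  · intro x hx
    rw [mem_Ici] at hx
    rw [gammaPDFReal, if_neg hx, mul_zero]

lemma integrable_gammaMeasure_iff (ha : 0 < a) (hb : 0 < b) {f : ℝ → ℝ} :
    Integrable f (gammaMeasure a b) ↔ Integrable (fun x ↦ f x * gammaPDFReal a b x) := by
  rw [gammaMeasure, gammaPDF_eq_coe_toNNReal,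
    integrable_withDensity_iff_integrable_smul (measurable_gammaPDFReal a b).real_toNNReal]
  refine integrable_congr (ae_of_all _ fun x ↦ ?_)
  dsimp only
  rw [NNReal.smul_def, Real.coe_toNNReal _ (gammaPDFReal_nonneg ha hb x), smul_eq_mul, mul_comm]

lemma pow_mul_gammaPDFReal (ha : 0 < a) (hb : 0 < b) (n : ℕ) (x : ℝ) :
    x ^ n * gammaPDFReal a b x
      = Gamma (a + n) / (Gamma a * b ^ n) * gammaPDFReal (a + n) b x := by
  unfold gammaPDFReal
  split_ifs with hx
  · have hΓ := (Gamma_pos_of_pos ha).ne'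
    have hΓn := (Gamma_pos_of_pos (by positivity : 0 < a + n)).ne'
    have hpow : x ^ n * x ^ (a - 1) = x ^ (a + n - 1) := by
      rcases hx.eq_or_lt with rfl | hx
      · rcases n.eq_zero_or_pos with rfl | hn
        · simp
        · have hn' : (1 : ℝ) ≤ n := by exact_mod_cast hn
          rw [zero_pow hn.ne', zero_mul, zero_rpow (by linarith)]
      · rw [add_sub_right_comm, rpow_add_natCast hx.ne', mul_comm]
    rw [rpow_add_natCast hb.ne', ← hpow]
    field_simp
  · simp

lemma tendsto_gammaPDFReal_atTop (hb : 0 < b) : Tendsto (gammaPDFReal a b) atTop (𝓝 0) := by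
  have h := (tendsto_rpow_mul_exp_neg_mul_atTop_nhds_zero (a - 1) b hb).const_mul (b ^ a / Gamma a)
  rw [mul_zero] at h
  refine h.congr' ?_
  filter_upwards [eventually_ge_atTop 0] with x hx
  rw [gammaPDFReal, if_pos hx, neg_mul, mul_assoc]

lemma integrable_eval_mul_gammaPDFReal (ha : 0 < a) (hb : 0 < b) (p : ℝ[X]) :
    Integrable (fun x ↦ p.eval x * gammaPDFReal a b x) := by
  induction p using Polynomial.induction_on' with
  | add p q hp hq =>
    simp only [eval_add, add_mul]
    exact hp.add hq
  | monomial n c =>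
    have han : 0 < a + n := by positivity
    have hpdf : Integrable (gammaPDFReal (a + n) b) := by
      have := isProbabilityMeasure_gammaMeasure han hb
      simpa using (integrable_gammaMeasure_iff han hb).1 (integrable_const (1 : ℝ))
    simp_rw [eval_monomial, mul_assoc, pow_mul_gammaPDFReal ha hb]
    exact (hpdf.const_mul _).const_mul _

lemma integrable_eval_gammaMeasure (ha : 0 < a) (hb : 0 < b) (p : ℝ[X]) :
    Integrable (fun x ↦ p.eval x) (gammaMeasure a b) :=
  (integrable_gammaMeasure_iff ha hb).2 (integrable_eval_mul_gammaPDFReal ha hb p)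

lemma tendsto_eval_mul_gammaPDFReal_atTop (ha : 0 < a) (hb : 0 < b) (p : ℝ[X]) :
    Tendsto (fun x ↦ p.eval x * gammaPDFReal a b x) atTop (𝓝 0) := by
  induction p using Polynomial.induction_on' with
  | add p q hp hq => simpa only [eval_add, add_mul, add_zero] using hp.add hq
  | monomial n c =>
    simp_rw [eval_monomial, mul_assoc, pow_mul_gammaPDFReal ha hb]
    simpa using ((tendsto_gammaPDFReal_atTop hb).const_mul _).const_mul c

lemma hasDerivAt_mul_gammaPDFReal {x : ℝ} (hx : 0 < x) :
    HasDerivAt (fun y ↦ y * gammaPDFReal a b y) ((a - b * x) * gammaPDFReal a b x) x := by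
  have hformula : (fun y ↦ b ^ a / Gamma a * (y ^ a * exp (-(b * y))))
      =ᶠ[𝓝 x] fun y ↦ y * gammaPDFReal a b y := by
    filter_upwards [lt_mem_nhds hx] with y hy
    rw [gammaPDFReal, if_pos hy.le, rpow_sub_one hy.ne']
    field_simp
  have hd := ((hasDerivAt_rpow_const (p := a) (Or.inl hx.ne')).mul
    ((hasDerivAt_id x).const_mul b).neg.exp).const_mul (b ^ a / Gamma a)
  simp only [Pi.mul_def, Pi.neg_apply, id, mul_one] at hd
  refine (hd.congr_of_eventuallyEq hformula.symm).congr_deriv ?_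
  rw [gammaPDFReal, if_pos hx.le, rpow_sub_one hx.ne']
  field_simp
  ring

lemma continuousWithinAt_mul_gammaPDFReal (ha : 0 < a) (hb : 0 < b) :
    ContinuousWithinAt (fun y ↦ y * gammaPDFReal a b y) (Ici 0) 0 := by
  have hshift := fun y ↦ pow_mul_gammaPDFReal ha hb 1 y
  simp only [pow_one, Nat.cast_one] at hshift
  simp_rw [hshift]
  have hformula : ContinuousAt
      (fun y ↦ b ^ (a + 1) / Gamma (a + 1) * y ^ (a + 1 - 1) * exp (-(b * y))) 0 := by
    have : ContinuousAt (fun y : ℝ ↦ y ^ (a + 1 - 1)) 0 :=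
      continuousAt_rpow_const _ _ (Or.inr (by linarith))
    fun_prop
  have hpdf : ContinuousWithinAt (gammaPDFReal (a + 1) b) (Ici 0) 0 :=
    hformula.continuousWithinAt.congr_of_mem
      (fun y hy ↦ by rw [gammaPDFReal, if_pos (mem_Ici.1 hy)]) (mem_Ici.2 le_rfl)
  exact hpdf.const_mul _

theorem integral_gammaMeasure_stein (ha : 0 < a) (hb : 0 < b) (p : ℝ[X]) :
    ∫ x, (x * p.derivative.eval x + (a - b * x) * p.eval x) ∂gammaMeasure a b = 0 := by
  set q : ℝ[X] := X * derivative p + (C a - C b * X) * p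
  have hq (x : ℝ) : q.eval x = x * p.derivative.eval x + (a - b * x) * p.eval x := by simp [q]
  set f : ℝ → ℝ := fun y ↦ p.eval y * (y * gammaPDFReal a b y)
  have hcont : ContinuousWithinAt f (Ici 0) 0 :=
    p.continuous.continuousWithinAt.mul (continuousWithinAt_mul_gammaPDFReal ha hb)
  have hderiv (x : ℝ) (hx : x ∈ Ioi 0) : HasDerivAt f (q.eval x * gammaPDFReal a b x) x := by
    refine ((p.hasDerivAt x).mul (hasDerivAt_mul_gammaPDFReal hx)).congr_deriv ?_
    rw [hq]
    ring
  have hlim : Tendsto f atTop (𝓝 0) :=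
    (tendsto_eval_mul_gammaPDFReal_atTop ha hb (p * X)).congr fun y ↦ by simp [f, mul_assoc]
  simp_rw [← hq]
  rw [integral_gammaMeasure_eq_integral_Ioi ha hb,
    integral_Ioi_of_hasDerivAt_of_tendsto hcont hderiv
      (integrable_eval_mul_gammaPDFReal ha hb q).integrableOn hlim]
  simp [f]

lemma integral_id_gammaMeasure (ha : 0 < a) (hb : 0 < b) :
    ∫ x, x ∂gammaMeasure a b = a / b := by
  have := isProbabilityMeasure_gammaMeasure ha hb
  have hX : Integrable (fun x : ℝ ↦ x) (gammaMeasure a b) := by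
    simpa using integrable_eval_gammaMeasure ha hb X
  have h := integral_gammaMeasure_stein ha hb 1
  simp only [derivative_one, eval_zero, eval_one, mul_zero, mul_one, zero_add] at h
  rw [integral_sub (integrable_const a) (hX.const_mul b), integral_const_mul] at h
  simp only [integral_const, probReal_univ, smul_eq_mul, one_mul] at h
  field_simp
  linarith

lemma centralMoment_id_gammaMeasure (ha : 0 < a) (hb : 0 < b) (n : ℕ) :
    centralMoment id n (gammaMeasure a b) = ∫ x, (x - a / b) ^ n ∂gammaMeasure a b := by
  simp only [centralMoment, Pi.pow_apply, Pi.sub_apply, id_eq, integral_id_gammaMeasure ha hb]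

theorem centralMoment_id_gammaMeasure_add_two (ha : 0 < a) (hb : 0 < b) (n : ℕ) :
    b * centralMoment id (n + 2) (gammaMeasure a b)
      = (n + 1) * centralMoment id (n + 1) (gammaMeasure a b)
        + (n + 1) * (a / b) * centralMoment id n (gammaMeasure a b) := by
  have hint (k : ℕ) : Integrable (fun x ↦ (x - a / b) ^ k) (gammaMeasure a b) := by
    have h := integrable_eval_gammaMeasure ha hb ((X - C (a / b)) ^ k)
    simp only [eval_pow, eval_sub, eval_X, eval_C] at h
    exact h
  have hpt (x : ℝ) : x * ((n + 1) * (x - a / b) ^ n) + (a - b * x) * (x - a / b) ^ (n + 1)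
      = (n + 1) * (x - a / b) ^ (n + 1) + (n + 1) * (a / b) * (x - a / b) ^ n
        - b * (x - a / b) ^ (n + 2) := by
    have hmean : a - b * x = -b * (x - a / b) := by
      field_simp
      ring
    rw [hmean]
    ring
  have h := integral_gammaMeasure_stein ha hb ((X - C (a / b)) ^ (n + 1))
  simp only [derivative_X_sub_C_pow, eval_pow, eval_sub, eval_X, eval_C, eval_mul,
    Nat.cast_add, Nat.cast_one, add_tsub_cancel_right, hpt] at h
  have hlower : Integrable (fun x ↦ (n + 1) * (x - a / b) ^ (n + 1)
      + (n + 1) * (a / b) * (x - a / b) ^ n) (gammaMeasure a b) :=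
    ((hint _).const_mul _).add ((hint _).const_mul _)
  rw [integral_sub hlower ((hint _).const_mul _),
    integral_add ((hint _).const_mul _) ((hint _).const_mul _), integral_const_mul,
    integral_const_mul, integral_const_mul] at h
  simp only [centralMoment_id_gammaMeasure ha hb]
  linarith

end ProbabilityTheory

section MomentBound

open Finset Nat

variable {s b : ℝ}

noncomputable def gammaMomentBound (s b : ℝ) (n : ℕ) : ℝ :=
  n ! * s / b ^ n * ∑ j ∈ range (n + 1), s ^ j

lemma gammaMomentBound_recurrence_le (hs : 0 ≤ s) (hb : 0 < b) (n : ℕ) :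
    (n + 1) * gammaMomentBound s b (n + 1) + (n + 1) * (s ^ 2 / b) * gammaMomentBound s b n
      ≤ b * gammaMomentBound s b (n + 2) := by
  set S : ℕ → ℝ := fun k ↦ ∑ j ∈ range (k + 1), s ^ j
  have hS : (n + 1) * S (n + 1) + s ^ 2 * S n ≤ (n + 2) * S (n + 2) := by
    have hlast : S (n + 2) = s ^ (n + 2) + S (n + 1) := geom_sum_succ'
    have hfirst : S (n + 2) = s ^ 2 * S n + s + 1 := by
      simp only [S, geom_sum_succ (n := n + 2), geom_sum_succ (n := n + 1)]
      ring
    nlinarith [pow_nonneg hs (n + 2)]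
  have hK : 0 ≤ (n + 1)! * s / b ^ (n + 1) := by positivity
  calc _ = (n + 1)! * s / b ^ (n + 1) * ((n + 1) * S (n + 1) + s ^ 2 * S n) := by
          simp only [gammaMomentBound, S, factorial_succ]
          push_cast
          field_simp
          ring
    _ ≤ (n + 1)! * s / b ^ (n + 1) * ((n + 2) * S (n + 2)) := mul_le_mul_of_nonneg_left hS hK
    _ = b * gammaMomentBound s b (n + 2) := by
          simp only [gammaMomentBound, S, factorial_succ]
          push_cast
          field_simp
          ring

theorem le_gammaMomentBound (hs : 1 ≤ s) (hb : 0 < b) {m : ℕ → ℝ}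
    (h0 : m 0 ≤ 1) (h1 : m 1 ≤ 0)
    (hrec : ∀ n : ℕ, b * m (n + 2) ≤ (n + 1) * m (n + 1) + (n + 1) * (s ^ 2 / b) * m n)
    (n : ℕ) : m n ≤ gammaMomentBound s b n := by
  induction n using Nat.twoStepInduction with
  | zero => simpa [gammaMomentBound] using h0.trans hs
  | one =>
    refine h1.trans ?_
    rw [gammaMomentBound]
    positivity
  | more n ih0 ih1 =>
    refine le_of_mul_le_mul_left ?_ hb
    calc b * m (n + 2) ≤ (n + 1) * m (n + 1) + (n + 1) * (s ^ 2 / b) * m n := hrec n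
      _ ≤ (n + 1) * gammaMomentBound s b (n + 1)
            + (n + 1) * (s ^ 2 / b) * gammaMomentBound s b n := by gcongr
      _ ≤ b * gammaMomentBound s b (n + 2) := gammaMomentBound_recurrence_le (by linarith) hb n

end MomentBound

theorem erlang_central_moment_bound_general
    {Ω : Type*} [MeasurableSpace Ω] (P : Measure Ω)
    (a : ℕ) (ha : 2 ≤ a) (b : ℝ) (hb : 0 < b)
    (Y : Ω → ℝ) (hY : Measure.map Y P = gammaMeasure a b) :
    ∀ k : ℕ, 1 ≤ k →
      ∫ ω, (Y ω - a / b) ^ k ∂P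
        ≤ (k.factorial * Real.sqrt a / b ^ k)
            * ((Real.sqrt a ^ (k + 1) - 1) / (Real.sqrt a - 1)) := by
  intro k _
  have ha₀ : (0 : ℝ) < a := by positivity
  have := isProbabilityMeasure_gammaMeasure ha₀ hb
  have hs : 1 < √(a : ℝ) := by
    rw [lt_sqrt zero_le_one, one_pow]
    exact_mod_cast ha
  have hYmeas : AEMeasurable Y P :=
    .of_map_ne_zero (by rw [hY]; exact IsProbabilityMeasure.ne_zero _)
  calc ∫ ω, (Y ω - a / b) ^ k ∂P = centralMoment id k (gammaMeasure a b) := by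
        rw [centralMoment_id_gammaMeasure ha₀ hb, ← hY, integral_map hYmeas (by fun_prop)]
    _ ≤ gammaMomentBound √a b k := by
        refine le_gammaMomentBound (m := fun n ↦ centralMoment id n (gammaMeasure a b)) hs.le hb
          (by simp [centralMoment]) centralMoment_one.le (fun n ↦ ?_) k
        rw [sq_sqrt ha₀.le]
        exact (centralMoment_id_gammaMeasure_add_two ha₀ hb n).le
    _ = _ := by rw [gammaMomentBound, geom_sum_eq hs.ne']

/-- central moment bound for an Erlang(a, b) random variable
(Lemma A.1 of the paper). -/
theorem erlang_central_moment_bound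
    {Ω : Type*} [MeasurableSpace Ω] (P : Measure Ω) [IsProbabilityMeasure P]
    (a : ℕ) (ha : 2 ≤ a) (b : ℝ) (hb : 0 < b)
    (Y : Ω → ℝ) (hY : Measure.map Y P = gammaMeasure a b) :
    ∀ k : ℕ, 1 ≤ k →
      ∫ ω, (Y ω - a / b) ^ k ∂P
        ≤ (k.factorial * Real.sqrt a / b ^ k)
            * ((Real.sqrt a ^ (k + 1) - 1) / (Real.sqrt a - 1)) :=
  erlang_central_moment_bound_general P a ha b hb Y hY
end

section
/- Let a be a natural number with a ≥ 2, and let Y be a random variable with the Erlang (Gamma) distribution of shape a and rate 1, so that Y has mean a. Then for every natural number k ≥ 1, E[(Y − a)^k] ≤ k! · Σ_{j=1}^{k} (sqrt(a))^j. -/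
/-
The raw moments of the Gamma(A, 1) law are `Γ(A + n) / Γ(A)`, so the functional equation of `Γ`
gives `E[Y ^ (n + 1)] = (A + n) E[Y ^ n]`. By linearity this is the Stein-type identity
`E[Y p(Y)] = A E[p(Y)] + E[Y p'(Y)]` for every polynomial `p`; taking `p = (X - A) ^ (k + 1)`
yields the recurrence `μ (k + 2) = (k + 1) (A μ k + μ (k + 1))` for the central moments, with
`μ 0 = 1` and `μ 1 = 0`. The bound then follows by a two-step induction, using
`(k + 2) ((k + 1)! + (k + 2)!) = (k + 3)!` and `A ∑_{j ≤ n} √A ^ j ≤ ∑_{j ≤ n + 2} √A ^ j`.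
-/

open MeasureTheory ProbabilityTheory Real Finset
open Polynomial
open scoped ENNReal NNReal

namespace ProbabilityTheory

lemma gammaPDFReal_one_mul_eq_indicator (A : ℝ) (f : ℝ → ℝ) :
    (fun x ↦ gammaPDFReal A 1 x * f x) =
      (Set.Ici 0).indicator (fun x ↦ x ^ (A - 1) * exp (-x) / Gamma A * f x) := by
  funext x
  by_cases hx : 0 ≤ x
  · simp only [gammaPDFReal, Set.indicator, Set.mem_Ici, if_pos hx, one_rpow, one_mul]
    ring
  · simp only [gammaPDFReal, Set.indicator, Set.mem_Ici, if_neg hx, zero_mul]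

lemma integral_gammaMeasure_one {A : ℝ} (hA : 0 < A) (f : ℝ → ℝ) :
    ∫ x, f x ∂gammaMeasure A 1 = ∫ x in Set.Ioi 0, x ^ (A - 1) * exp (-x) / Gamma A * f x := by
  rw [gammaMeasure, show gammaPDF A 1 = fun x ↦ ((gammaPDFReal A 1 x).toNNReal : ℝ≥0∞) from rfl,
    integral_withDensity_eq_integral_smul (measurable_gammaPDFReal A 1).real_toNNReal]
  simp_rw [NNReal.smul_def, Real.coe_toNNReal _ (gammaPDFReal_nonneg hA one_pos _), smul_eq_mul]
  rw [gammaPDFReal_one_mul_eq_indicator, integral_indicator measurableSet_Ici,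
    integral_Ici_eq_integral_Ioi]

lemma integrable_gammaMeasure_one_iff {A : ℝ} (hA : 0 < A) (f : ℝ → ℝ) :
    Integrable f (gammaMeasure A 1) ↔
      IntegrableOn (fun x ↦ x ^ (A - 1) * exp (-x) / Gamma A * f x) (Set.Ioi 0) := by
  rw [gammaMeasure, show gammaPDF A 1 = fun x ↦ ((gammaPDFReal A 1 x).toNNReal : ℝ≥0∞) from rfl,
    integrable_withDensity_iff_integrable_smul (measurable_gammaPDFReal A 1).real_toNNReal]
  simp_rw [NNReal.smul_def, Real.coe_toNNReal _ (gammaPDFReal_nonneg hA one_pos _), smul_eq_mul]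
  rw [gammaPDFReal_one_mul_eq_indicator, integrable_indicator_iff measurableSet_Ici,
    integrableOn_Ici_iff_integrableOn_Ioi]

lemma eqOn_gamma_density_mul_pow (A : ℝ) (n : ℕ) :
    Set.EqOn (fun x ↦ x ^ (A - 1) * exp (-x) / Gamma A * x ^ n)
      (fun x ↦ (Gamma A)⁻¹ * (exp (-x) * x ^ (A + n - 1))) (Set.Ioi 0) := by
  intro x (hx : 0 < x)
  dsimp only
  rw [show A + n - 1 = (A - 1) + n by ring, rpow_add hx, rpow_natCast]
  ring

lemma integrable_pow_gammaMeasure_one {A : ℝ} (hA : 0 < A) (n : ℕ) :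
    Integrable (fun x ↦ x ^ n) (gammaMeasure A 1) := by
  rw [integrable_gammaMeasure_one_iff hA, integrableOn_congr_fun (eqOn_gamma_density_mul_pow A n)
    measurableSet_Ioi]
  exact (GammaIntegral_convergent (by positivity)).const_mul _

lemma integral_pow_gammaMeasure_one {A : ℝ} (hA : 0 < A) (n : ℕ) :
    ∫ x, x ^ n ∂gammaMeasure A 1 = Gamma (A + n) / Gamma A := by
  rw [integral_gammaMeasure_one hA, setIntegral_congr_fun measurableSet_Ioi
    (eqOn_gamma_density_mul_pow A n), integral_const_mul, ← Gamma_eq_integral (by positivity),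
    inv_mul_eq_div]

lemma integral_pow_succ_gammaMeasure_one {A : ℝ} (hA : 0 < A) (n : ℕ) :
    ∫ x, x ^ (n + 1) ∂gammaMeasure A 1 = (A + n) * ∫ x, x ^ n ∂gammaMeasure A 1 := by
  rw [integral_pow_gammaMeasure_one hA, integral_pow_gammaMeasure_one hA, Nat.cast_succ,
    ← add_assoc, Gamma_add_one (by positivity : (0:ℝ) < A + n).ne', mul_div_assoc]

lemma integrable_eval_gammaMeasure_one {A : ℝ} (hA : 0 < A) (p : ℝ[X]) :
    Integrable (fun x ↦ p.eval x) (gammaMeasure A 1) := by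
  induction p using Polynomial.induction_on' with
  | add p q hp hq =>
    simp only [eval_add]
    exact hp.add hq
  | monomial n c => simpa using (integrable_pow_gammaMeasure_one hA n).const_mul c

lemma integral_X_mul_eval_gammaMeasure_one {A : ℝ} (hA : 0 < A) (p : ℝ[X]) :
    ∫ x, (X * p).eval x ∂gammaMeasure A 1 =
      A * ∫ x, p.eval x ∂gammaMeasure A 1 + ∫ x, (X * derivative p).eval x ∂gammaMeasure A 1 := by
  have hint (q : ℝ[X]) := integrable_eval_gammaMeasure_one hA q
  induction p using Polynomial.induction_on' with
  | add p q hp hq =>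
    simp only [mul_add, derivative_add, eval_add]
    rw [integral_add (hint _) (hint _), integral_add (hint _) (hint _),
      integral_add (hint _) (hint _), hp, hq]
    ring
  | monomial n c =>
    have hder : (fun x ↦ (X * derivative (monomial n c)).eval x) = fun x ↦ c * n * x ^ n := by
      funext x
      rcases n with _ | n <;> simp [pow_succ]
    simp only [X_mul_monomial, eval_monomial, hder, integral_const_mul,
      integral_pow_succ_gammaMeasure_one hA n]
    ring

lemma integrable_sub_pow_gammaMeasure_one {A : ℝ} (hA : 0 < A) (b : ℝ) (k : ℕ) :
    Integrable (fun x ↦ (x - b) ^ k) (gammaMeasure A 1) := by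
  have h := integrable_eval_gammaMeasure_one hA ((X - C b) ^ k)
  simp only [eval_pow, eval_sub, eval_X, eval_C] at h
  exact h

lemma integral_sub_pow_add_two_gammaMeasure_one {A : ℝ} (hA : 0 < A) (k : ℕ) :
    ∫ x, (x - A) ^ (k + 2) ∂gammaMeasure A 1 =
      (k + 1) * (A * ∫ x, (x - A) ^ k ∂gammaMeasure A 1 +
        ∫ x, (x - A) ^ (k + 1) ∂gammaMeasure A 1) := by
  have hint := integrable_sub_pow_gammaMeasure_one hA A
  have h := integral_X_mul_eval_gammaMeasure_one hA ((X - C A) ^ (k + 1))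
  have hX : (fun x ↦ (X * (X - C A) ^ (k + 1)).eval x) =
      fun x ↦ (x - A) ^ (k + 2) + A * (x - A) ^ (k + 1) := by
    funext x
    simp only [eval_mul, eval_X, eval_pow, eval_sub, eval_C]
    ring
  have hD : (fun x ↦ (X * derivative ((X - C A) ^ (k + 1))).eval x) =
      fun x ↦ (k + 1) * (x - A) ^ (k + 1) + (k + 1) * A * (x - A) ^ k := by
    funext x
    simp only [derivative_X_sub_C_pow, eval_mul, eval_X, eval_pow, eval_sub, eval_C]
    push_cast
    ring
  rw [hX, hD, integral_add (hint _) ((hint _).const_mul _),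
    integral_add ((hint _).const_mul _) ((hint _).const_mul _)] at h
  simp only [integral_const_mul, eval_pow, eval_sub, eval_X, eval_C] at h
  linear_combination h

lemma integral_sub_pow_zero_gammaMeasure_one {A : ℝ} (hA : 0 < A) :
    ∫ x, (x - A) ^ 0 ∂gammaMeasure A 1 = 1 := by
  have := isProbabilityMeasure_gammaMeasure hA one_pos
  simp

lemma integral_sub_pow_one_gammaMeasure_one {A : ℝ} (hA : 0 < A) :
    ∫ x, (x - A) ^ 1 ∂gammaMeasure A 1 = 0 := by
  have := isProbabilityMeasure_gammaMeasure hA one_pos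
  have hmean : ∫ x, x ∂gammaMeasure A 1 = A := by
    simpa using integral_pow_succ_gammaMeasure_one hA 0
  have hid : Integrable (fun x ↦ x) (gammaMeasure A 1) := by
    simpa using integrable_pow_gammaMeasure_one hA 1
  simp_rw [pow_one]
  rw [integral_sub hid (integrable_const A), hmean]
  simp

end ProbabilityTheory

lemma sq_mul_sum_Icc_pow_le {s : ℝ} (hs : 0 ≤ s) (n : ℕ) :
    s ^ 2 * ∑ j ∈ Icc 1 n, s ^ j ≤ ∑ j ∈ Icc 1 (n + 2), s ^ j := by
  induction n with
  | zero => simp; positivity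
  | succ n ih =>
    rw [sum_Icc_succ_top (by omega), show n + 1 + 2 = n + 2 + 1 by rfl,
      sum_Icc_succ_top (by omega)]
    linear_combination ih

lemma le_factorial_mul_sum_sqrt_pow_of_recurrence {A : ℝ} (hA : 0 ≤ A) {c : ℕ → ℝ}
    (h0 : c 0 = 1) (h1 : c 1 = 0) (hrec : ∀ k : ℕ, c (k + 2) = (k + 1) * (A * c k + c (k + 1)))
    (k : ℕ) : c (k + 1) ≤ (k + 1).factorial * ∑ j ∈ Icc 1 (k + 1), √A ^ j := by
  set G : ℕ → ℝ := fun n ↦ ∑ j ∈ Icc 1 n, √A ^ j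
  have hs := sqrt_nonneg A
  have hG_nonneg (n : ℕ) : 0 ≤ G n := sum_nonneg fun j _ ↦ pow_nonneg hs j
  have hG_succ (n : ℕ) : G (n + 1) = G n + √A ^ (n + 1) := sum_Icc_succ_top (by omega) _
  change c (k + 1) ≤ (k + 1).factorial * G (k + 1)
  induction k using Nat.twoStepInduction with
  | zero => simpa [h1] using hG_nonneg 1
  | one =>
    have hc2 : c 2 = A := by simpa [h0, h1] using hrec 0
    have hG2 : G 2 = √A + A := by simp [hG_succ, G, sq_sqrt hA]
    rw [hc2, hG2]
    norm_num
    linarith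
  | more k ih₁ ih₂ =>
    have hA_mul : A * G (k + 1) ≤ G (k + 3) := by
      simpa only [sq_sqrt hA] using sq_mul_sum_Icc_pow_le hs (k + 1)
    have hG_mono : G (k + 2) ≤ G (k + 3) := by
      rw [hG_succ (k + 2)]
      linarith [pow_nonneg hs (k + 3)]
    have hfact : ((k + 3).factorial : ℝ) = (k + 2) * ((k + 1).factorial + (k + 2).factorial) := by
      push_cast [Nat.factorial_succ]
      ring
    calc c (k + 2 + 1) = (k + 2) * (A * c (k + 1) + c (k + 2)) := by
          rw [hrec (k + 1)]
          push_cast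
          ring
      _ ≤ (k + 2) * ((k + 1).factorial * G (k + 3) + (k + 2).factorial * G (k + 3)) := by
          have hA_term : A * c (k + 1) ≤ (k + 1).factorial * G (k + 3) :=
            calc A * c (k + 1) ≤ A * ((k + 1).factorial * G (k + 1)) := by gcongr
              _ = (k + 1).factorial * (A * G (k + 1)) := by ring
              _ ≤ (k + 1).factorial * G (k + 3) := by gcongr
          have hc_term : c (k + 2) ≤ (k + 2).factorial * G (k + 3) := ih₂.trans (by gcongr)
          exact mul_le_mul_of_nonneg_left (add_le_add hA_term hc_term) (by positivity)
      _ = (k + 2 + 1).factorial * G (k + 2 + 1) := by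
          rw [hfact]
          ring

theorem erlang_central_moment_bound_rate_one_general
    {Ω : Type*} [MeasurableSpace Ω] (P : Measure Ω)
    (a : ℕ) (ha : 2 ≤ a)
    (Y : Ω → ℝ) (hY : Measure.map Y P = gammaMeasure a 1) :
    ∀ k : ℕ, 1 ≤ k →
      ∫ ω, (Y ω - a) ^ k ∂P
        ≤ k.factorial * ∑ j ∈ Finset.Icc 1 k, Real.sqrt a ^ j := by
  intro k hk
  obtain ⟨k, rfl⟩ : ∃ n, k = n + 1 := ⟨k - 1, by omega⟩
  have ha_pos : (0 : ℝ) < a := by exact_mod_cast (by omega : 0 < a)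
  have hY_meas : AEMeasurable Y P := by
    refine AEMeasurable.of_map_ne_zero ?_
    have := isProbabilityMeasure_gammaMeasure ha_pos one_pos
    rw [hY]
    exact IsProbabilityMeasure.ne_zero _
  have h_transfer (n : ℕ) : ∫ ω, (Y ω - a) ^ n ∂P = ∫ x, (x - a) ^ n ∂gammaMeasure a 1 := by
    rw [← hY, integral_map hY_meas (by fun_prop)]
  simp only [h_transfer]
  exact le_factorial_mul_sum_sqrt_pow_of_recurrence ha_pos.le
    (c := fun n ↦ ∫ x, (x - a) ^ n ∂gammaMeasure a 1)
    (integral_sub_pow_zero_gammaMeasure_one ha_pos) (integral_sub_pow_one_gammaMeasure_one ha_pos)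
    (integral_sub_pow_add_two_gammaMeasure_one ha_pos) k

/-- central moment bound for an Erlang(a, 1) random variable
(normalized form of Lemma A.1 of the paper). -/
theorem erlang_central_moment_bound_rate_one
    {Ω : Type*} [MeasurableSpace Ω] (P : Measure Ω) [IsProbabilityMeasure P]
    (a : ℕ) (ha : 2 ≤ a)
    (Y : Ω → ℝ) (hY : Measure.map Y P = gammaMeasure a 1) :
    ∀ k : ℕ, 1 ≤ k →
      ∫ ω, (Y ω - a) ^ k ∂P
        ≤ k.factorial * ∑ j ∈ Finset.Icc 1 k, Real.sqrt a ^ j :=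
  erlang_central_moment_bound_rate_one_general P a ha Y hY
end

section
/- Let a be a real number with a ≥ 1 and let k₀ be a natural number with k₀ ≥ 1. Then k₀! · a · (1 + Σ_{i=2}^{k₀−1} Σ_{j=1}^{i} (sqrt(a))^j) ≤ (k₀+1)! · Σ_{j=1}^{k₀+1} (sqrt(a))^j, where an inner or outer sum over an empty index range is 0. -/
open Real Finset

/-- the induction-step inequality in the proof of Lemma A.1. -/
theorem induction_step_inequality
    (a : ℝ) (ha : 1 ≤ a) (k₀ : ℕ) (hk₀ : 1 ≤ k₀) :
    (k₀.factorial : ℝ) * a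
        * (1 + ∑ i ∈ Finset.Icc 2 (k₀ - 1), ∑ j ∈ Finset.Icc 1 i, Real.sqrt a ^ j)
      ≤ ((k₀ + 1).factorial : ℝ) * ∑ j ∈ Finset.Icc 1 (k₀ + 1), Real.sqrt a ^ j := by
  set s := Real.sqrt a with hsdef
  have hs1 : (1 : ℝ) ≤ s := by
    rw [show (1:ℝ) = Real.sqrt 1 by simp, hsdef]
    exact Real.sqrt_le_sqrt ha
  have hs0 : (0:ℝ) ≤ s := le_trans zero_le_one hs1
  have ha2 : s ^ 2 = a := Real.sq_sqrt (by linarith)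
  set S := ∑ j ∈ Finset.Icc 1 (k₀+1), s ^ j with hS
  have hterm : ∀ j ∈ Finset.Icc 1 (k₀+1), (0:ℝ) ≤ s ^ j := fun j _ => pow_nonneg hs0 j
  have hS0 : (0:ℝ) ≤ S := Finset.sum_nonneg hterm
  have h1 : s ^ 2 ≤ S := Finset.single_le_sum hterm (by simp [Finset.mem_Icc]; omega)
  have h2 : ∀ i ∈ Finset.Icc 2 (k₀-1), (∑ j ∈ Finset.Icc 1 i, s ^ (j+2)) ≤ S := by
    intro i hi
    simp only [Finset.mem_Icc] at hi
    have heq : ∑ j ∈ Finset.Icc 1 i, s ^ (j+2) = ∑ j ∈ Finset.Icc 3 (i+2), s ^ j := by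
      rw [show Finset.Icc 3 (i+2) = Finset.Icc (1+2) (i+2) by norm_num,
        ← Finset.map_add_right_Icc, Finset.sum_map]
      simp [addRightEmbedding]
    rw [heq]
    apply Finset.sum_le_sum_of_subset_of_nonneg
    · intro x hx; simp only [Finset.mem_Icc] at *; omega
    · exact fun j _ _ => pow_nonneg hs0 j
  have hsum := Finset.sum_le_card_nsmul (Finset.Icc 2 (k₀-1)) _ S h2
  have hcard : (Finset.Icc 2 (k₀-1)).card = k₀ - 2 := by rw [Nat.card_Icc]; omega
  rw [hcard, nsmul_eq_mul] at hsum
  have hcast : ((k₀ - 2 : ℕ) : ℝ) ≤ (k₀ : ℝ) := by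
    exact_mod_cast Nat.sub_le k₀ 2
  have key : s ^ 2 + ∑ i ∈ Finset.Icc 2 (k₀-1), ∑ j ∈ Finset.Icc 1 i, s ^ (j+2)
      ≤ ((k₀:ℝ) + 1) * S := by nlinarith
  have lhs_eq : a * (1 + ∑ i ∈ Finset.Icc 2 (k₀ - 1), ∑ j ∈ Finset.Icc 1 i, s ^ j)
      = s ^ 2 + ∑ i ∈ Finset.Icc 2 (k₀-1), ∑ j ∈ Finset.Icc 1 i, s ^ (j+2) := by
    rw [← ha2, mul_add, mul_one, Finset.mul_sum]
    congr 1
    refine Finset.sum_congr rfl fun i _ => ?_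
    rw [Finset.mul_sum]
    refine Finset.sum_congr rfl fun j _ => ?_
    rw [← pow_add]; ring_nf
  calc (k₀.factorial : ℝ) * a * (1 + ∑ i ∈ Finset.Icc 2 (k₀ - 1), ∑ j ∈ Finset.Icc 1 i, s ^ j)
      = (k₀.factorial : ℝ) * (s ^ 2 + ∑ i ∈ Finset.Icc 2 (k₀-1), ∑ j ∈ Finset.Icc 1 i, s ^ (j+2)) := by
        rw [mul_assoc, lhs_eq]
    _ ≤ (k₀.factorial : ℝ) * (((k₀:ℝ) + 1) * S) := by
        apply mul_le_mul_of_nonneg_left key (by positivity)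
    _ = ((k₀ + 1).factorial : ℝ) * S := by
        rw [Nat.factorial_succ]; push_cast; ring
end
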